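/- Let n be a unit timelike vector field on a Lorentzian manifold with ∇_X n = τ X for all X orthogonal to n (umbilicity), let V = α n + U be a conformal vector field (£_V g = 2ψ g) with U orthogonal to n. Then for all X, Y orthogonal to n, (£_U g)(X, Y) = 2(ψ - α τ) g(X, Y); in particular U restricts to a conformal vector field on the orthogonal distribution with scale function ψ - ατ. -/

import Mathlib

/-!
For a torsion-free metric connection the Lie derivative of the metric is the symmetrised
covariant derivative, `(£_W g)(X, Y) = g(∇_X W, Y) + g(X, ∇_Y W)`. For `X, Y ⊥ n`, umbilicity
gives `∇_X (α n) = (Xα) n + α τ X`, whose `n`-component is invisible against `Y`; hence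
`£_{α n} g` contributes exactly `2 α τ g(X, Y)` to `£_V g = 2 ψ g`, and the rest is `£_U g`.
-/

theorem map_sub_left_of_map_add_left {F V : Type*} [AddGroup F] [AddGroup V] (g : V → V → F)
    (hg_add : ∀ X Y Z, g (X + Y) Z = g X Z + g Y Z) (X Y Z : V) :
    g (X - Y) Z = g X Z - g Y Z :=
  eq_sub_of_add_eq (by rw [← hg_add, sub_add_cancel])

section ConformalSplitting

variable {F V : Type*} [CommRing F] [AddCommGroup V]
  (g : V → V → F) (d : V → F → F) (D : V → V → V) (bracket : V → V → V)

theorem lieDeriv_eq_symm_covDeriv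
    (hg_symm : ∀ X Y, g X Y = g Y X)
    (hg_add : ∀ X Y Z, g (X + Y) Z = g X Z + g Y Z)
    (hcompat : ∀ X Y Z, d X (g Y Z) = g (D X Y) Z + g Y (D X Z))
    (htorsion : ∀ X Y, bracket X Y = D X Y - D Y X) (W X Y : V) :
    d W (g X Y) - g (bracket W X) Y - g X (bracket W Y) = g (D X W) Y + g X (D Y W) := by
  have hg_sub := map_sub_left_of_map_add_left g hg_add
  rw [htorsion, htorsion, hcompat, hg_sub, hg_symm X (D W Y - D Y W), hg_sub, hg_symm (D W Y) X,
    hg_symm (D Y W) X]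
  ring

theorem metric_covDeriv_smul_normal_add [Module F V]
    (hg_symm : ∀ X Y, g X Y = g Y X)
    (hg_add : ∀ X Y Z, g (X + Y) Z = g X Z + g Y Z)
    (hg_smul : ∀ (f : F) (X Y : V), g (f • X) Y = f * g X Y)
    (hD_addR : ∀ X Y Z, D X (Y + Z) = D X Y + D X Z)
    (hD_leib : ∀ (X : V) (f : F) (Y : V), D X (f • Y) = d X f • Y + f • D X Y)
    {n : V} {τ : F} (humb : ∀ X, g X n = 0 → D X n = τ • X)
    (U : V) (α : F) (X Y : V) (hX : g X n = 0) (hY : g Y n = 0) :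
    g (D X (α • n + U)) Y = α * τ * g X Y + g (D X U) Y := by
  rw [hD_addR, hD_leib, humb X hX, hg_add, hg_add, hg_smul, hg_smul, hg_smul, hg_symm n, hY]
  ring

end ConformalSplitting

theorem stmt_10_general {F V : Type*} [CommRing F] [AddCommGroup V] [Module F V]
    (g : V → V → F) (d : V → F → F) (D : V → V → V) (bracket : V → V → V)
    (hg_symm : ∀ X Y, g X Y = g Y X)
    (hg_add : ∀ X Y Z, g (X + Y) Z = g X Z + g Y Z)
    (hg_smul : ∀ (f : F) (X Y : V), g (f • X) Y = f * g X Y)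
    (hD_addR : ∀ X Y Z, D X (Y + Z) = D X Y + D X Z)
    (hD_leib : ∀ (X : V) (f : F) (Y : V), D X (f • Y) = d X f • Y + f • D X Y)
    (hcompat : ∀ X Y Z, d X (g Y Z) = g (D X Y) Z + g Y (D X Z))
    (htorsion : ∀ X Y, bracket X Y = D X Y - D Y X)
    (n U : V) (α ψ τ : F)
    (humb : ∀ X, g X n = 0 → D X n = τ • X)
    (hconf : ∀ X Y, d (α • n + U) (g X Y) - g (bracket (α • n + U) X) Y
        - g X (bracket (α • n + U) Y) = 2 * ψ * g X Y) :
    ∀ X Y, g X n = 0 → g Y n = 0 →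
      d U (g X Y) - g (bracket U X) Y - g X (bracket U Y)
        = 2 * (ψ - α * τ) * g X Y := by
  intro X Y hX hY
  have hlie := lieDeriv_eq_symm_covDeriv g d D bracket hg_symm hg_add hcompat htorsion
  have hsplit := metric_covDeriv_smul_normal_add g d D hg_symm hg_add hg_smul hD_addR hD_leib
    humb U α
  have hV := hconf X Y
  rw [hlie, hsplit X Y hX hY, hg_symm X (D Y _), hsplit Y X hY hX, hg_symm Y X] at hV
  rw [hlie, hg_symm X (D Y U)]
  linear_combination hV

/-- Eq. (28): if `n` is a unit timelike vector field with umbilicity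
`∇_X n = τ X` for `X ⊥ n`, and `V = α n + U` is conformal (`£_V g = 2ψ g`)
with `U ⊥ n`, then for all `X, Y ⊥ n` one has
`(£_U g)(X,Y) = 2(ψ - ατ) g(X,Y)`: `U` is conformal on the slices. -/
theorem stmt_10 {F V : Type*} [CommRing F] [AddCommGroup V] [Module F V]
    (g : V → V → F) (d : V → F → F) (D : V → V → V) (bracket : V → V → V)
    (hg_symm : ∀ X Y, g X Y = g Y X)
    (hg_add : ∀ X Y Z, g (X + Y) Z = g X Z + g Y Z)
    (hg_smul : ∀ (f : F) (X Y : V), g (f • X) Y = f * g X Y)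
    (hd_add : ∀ (X : V) (a b : F), d X (a + b) = d X a + d X b)
    (hd_mul : ∀ (X : V) (a b : F), d X (a * b) = d X a * b + a * d X b)
    (hD_addR : ∀ X Y Z, D X (Y + Z) = D X Y + D X Z)
    (hD_leib : ∀ (X : V) (f : F) (Y : V), D X (f • Y) = d X f • Y + f • D X Y)
    (hcompat : ∀ X Y Z, d X (g Y Z) = g (D X Y) Z + g Y (D X Z))
    (htorsion : ∀ X Y, bracket X Y = D X Y - D Y X)
    (n U : V) (α ψ τ : F)
    (hn : g n n = -1) (hU : g U n = 0)
    (humb : ∀ X, g X n = 0 → D X n = τ • X)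
    (hconf : ∀ X Y, d (α • n + U) (g X Y) - g (bracket (α • n + U) X) Y
        - g X (bracket (α • n + U) Y) = 2 * ψ * g X Y) :
    ∀ X Y, g X n = 0 → g Y n = 0 →
      d U (g X Y) - g (bracket U X) Y - g X (bracket U Y)
        = 2 * (ψ - α * τ) * g X Y :=
  stmt_10_general g d D bracket hg_symm hg_add hg_smul hD_addR hD_leib hcompat htorsion n U α ψ τ
    humb hconf
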